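/- Let V, Q be finite-dimensional real inner product spaces, b : V × Q → ℝ bilinear satisfying sup_{v≠0} b(v,q)/‖v‖ ≥ β‖q‖ for all q ∈ Q. If δ ∈ Q satisfies b(w, δ) = F(w) − a(η, w) for all w ∈ V, where F ∈ V*, a is a bilinear form bounded by M, and η ∈ V, then β‖δ‖ ≤ ‖F‖_{V*} + M‖η‖. -/
import Mathlib


/-- Pressure-recovery estimate via the discrete inf-sup condition
(inequality (4.28) in the proof of Theorem 4.8). -/
theorem stmt_15 (V Q : Type*) [NormedAddCommGroup V] [InnerProductSpace ℝ V]
    [FiniteDimensional ℝ V] [NormedAddCommGroup Q] [InnerProductSpace ℝ Q]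
    [FiniteDimensional ℝ Q]
    (b : V →ₗ[ℝ] Q →ₗ[ℝ] ℝ) (a : V →ₗ[ℝ] V →ₗ[ℝ] ℝ) (β M : ℝ)
    (hβ : 0 < β) (hM : 0 ≤ M)
    (hinfsup : ∀ q : Q, β * ‖q‖ ≤ ⨆ v : {v : V // v ≠ 0}, b (v : V) q / ‖(v : V)‖)
    (ha_bdd : ∀ v w : V, |a v w| ≤ M * ‖v‖ * ‖w‖)
    (F : V →L[ℝ] ℝ) (η : V) (δ : Q)
    (heq : ∀ w : V, b w δ = F w - a η w) :
    β * ‖δ‖ ≤ ‖F‖ + M * ‖η‖ := by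
  have hRHS : (0:ℝ) ≤ ‖F‖ + M * ‖η‖ := by positivity
  refine (hinfsup δ).trans ?_
  by_cases h : Nonempty {v : V // v ≠ 0}
  · apply Real.iSup_le _ hRHS
    rintro ⟨v, hv⟩
    have hvpos : (0:ℝ) < ‖v‖ := norm_pos_iff.mpr hv
    rw [div_le_iff₀ hvpos]
    calc b v δ = F v - a η v := heq v
      _ ≤ |F v - a η v| := le_abs_self _
      _ ≤ |F v| + |a η v| := abs_sub _ _
      _ ≤ ‖F‖ * ‖v‖ + M * ‖η‖ * ‖v‖ := by
          gcongr
          · exact F.le_opNorm v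
          · exact ha_bdd η v
      _ = (‖F‖ + M * ‖η‖) * ‖v‖ := by ring
  · have : IsEmpty {v : V // v ≠ 0} := not_nonempty_iff.mp h
    rw [Real.iSup_of_isEmpty]
    exact hRHS
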